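/- Let A be a continuous adapted process such that [A, N] = 0 for every continuous (𝓕_s)-local martingale N, and let τ be a bounded stopping time. Then the stopped process A^τ, defined by A^τ_s = A_{s∧τ}, also satisfies [A^τ, N] = 0 for every continuous (𝓕_s)-local martingale N; i.e., the class of weak zero energy processes is stable under stopping. -/

import Mathlib

/-!
On `[0, τ - ε]` the regularized integrand of `A^τ` agrees with that of `A`, and after `τ` it
vanishes. Hence `ε⁻¹ ∫₀ˢ` of it is the regularized covariation of `A` and `N` at some time
`u ≤ s`, plus an average over a window of length at most `ε`; that average is dominated by a
product of increments of `A` and `N` over lags `≤ ε` in a fixed interval `[0, T]`, which tends to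
`0` pathwise by uniform continuity. Restricting to rational times makes the event where this
product is large measurable, so its probability tends to `0` as well.
-/

open MeasureTheory Filter Topology Set

noncomputable section

variable {Ω : Type*} {mΩ : MeasurableSpace Ω}

/-- Uniform convergence in probability on compact time intervals `[0, t]`, along a filter `l`. -/
def UCP {ι : Type*} (P : Measure Ω) (l : Filter ι)
    (X : ι → ℝ → Ω → ℝ) (Y : ℝ → Ω → ℝ) : Prop :=
  ∀ t : ℝ, 0 ≤ t → ∀ δ : ℝ, 0 < δ →
    Tendsto (fun i => P {ω | ∃ s ∈ Set.Icc (0 : ℝ) t, δ < |X i s ω - Y s ω|}) l (𝓝 0)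

/-- `C` is the covariation `[X, Y]` in the sense of regularization: the u.c.p. limit as
`ε → 0⁺` of `s ↦ (1/ε) ∫₀^s (X_{r+ε} - X_r)(Y_{r+ε} - Y_r) dr`. -/
def HasCovariation (P : Measure Ω) (X Y C : ℝ → Ω → ℝ) : Prop :=
  UCP P (𝓝[>] (0 : ℝ))
    (fun ε s ω => ε⁻¹ * ∫ r in (0 : ℝ)..s, (X (r + ε) ω - X r ω) * (Y (r + ε) ω - Y r ω)) C

/-- A process with continuous paths. -/
def ContProcess (X : ℝ → Ω → ℝ) : Prop := ∀ ω, Continuous fun s => X s ω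

/-- A continuous `(𝓕_s)`-local martingale: a continuous adapted process `M` for which there
exist stopping times `τ_k` increasing a.s. to `+∞` such that each stopped process
`s ↦ M_{s ∧ τ_k}` is an `(𝓕_s)`-martingale. -/
def IsContLocalMartingale (𝓕 : Filtration ℝ mΩ) (P : Measure Ω) (M : ℝ → Ω → ℝ) : Prop :=
  ContProcess M ∧ Adapted 𝓕 M ∧
  ∃ τ : ℕ → Ω → ℝ,
    (∀ k, IsStoppingTime 𝓕 (fun ω => ((τ k ω : ℝ) : WithTop ℝ))) ∧
    (∀ᵐ ω ∂P, (Monotone fun k => τ k ω) ∧ Tendsto (fun k => τ k ω) atTop atTop) ∧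
    (∀ k, Martingale (fun s ω => M (min s (τ k ω)) ω) 𝓕 P)

def covariationIntegrand (a n : ℝ → ℝ) (ε r : ℝ) : ℝ :=
  (a (r + ε) - a r) * (n (r + ε) - n r)

def covariationApprox (a n : ℝ → ℝ) (ε s : ℝ) : ℝ :=
  ε⁻¹ * ∫ r in (0 : ℝ)..s, covariationIntegrand a n ε r

lemma exists_lt_abs_of_lt_abs_inv_mul_integral {g : ℝ → ℝ} {u v ε c : ℝ} (huv : u ≤ v)
    (hvu : v - u ≤ ε) (hc : c < |ε⁻¹ * ∫ r in u..v, g r|) : ∃ r ∈ Icc u v, c < |g r| := by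
  by_contra! hg
  have hc0 : 0 ≤ c := (abs_nonneg _).trans (hg u ⟨le_rfl, huv⟩)
  have hint : |∫ r in u..v, g r| ≤ c * (v - u) := by
    simpa [abs_of_nonneg (sub_nonneg.mpr huv)] using
      intervalIntegral.norm_integral_le_of_norm_le_const (f := g) fun r hr =>
        (Real.norm_eq_abs _).trans_le (hg r (Ioc_subset_Icc_self (uIoc_of_le huv ▸ hr)))
  have hε : 0 ≤ ε := (sub_nonneg.mpr huv).trans hvu
  refine hc.not_ge ?_
  calc |ε⁻¹ * ∫ r in u..v, g r| ≤ ε⁻¹ * (c * (v - u)) := by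
        rw [abs_mul, abs_of_nonneg (inv_nonneg.mpr hε)]; gcongr
    _ = c * (ε⁻¹ * (v - u)) := by ring
    _ ≤ c := mul_le_of_le_one_right hc0 (inv_mul_le_one_of_le₀ hvu hε)

lemma covariationApprox_stop_eq {a n : ℝ → ℝ} (ha : Continuous a) (hn : Continuous n)
    {σ ε : ℝ} (hε : 0 ≤ ε) (s : ℝ) :
    covariationApprox (fun r => a (min r σ)) n ε s =
      covariationApprox a n ε (max 0 (min s σ - ε)) +
        ε⁻¹ * ∫ r in max 0 (min s σ - ε)..min s σ,
          covariationIntegrand (fun r => a (min r σ)) n ε r := by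
  set g := covariationIntegrand (fun r => a (min r σ)) n ε
  set v := min s σ
  set u := max 0 (v - ε)
  have hg : Continuous g := by unfold g covariationIntegrand; fun_prop
  have head : ∫ r in (0 : ℝ)..u, g r = ∫ r in (0 : ℝ)..u, covariationIntegrand a n ε r := by
    refine intervalIntegral.integral_congr_ae (ae_of_all _ fun r hr => ?_)
    rw [uIoc_of_le (le_max_left _ _)] at hr
    have hrv : r + ε ≤ v := by linarith [(le_max_iff.mp hr.2).resolve_left hr.1.not_ge]
    have hrσ : r + ε ≤ σ := hrv.trans (min_le_right _ _)
    simp only [g, covariationIntegrand, min_eq_left hrσ, min_eq_left (by linarith : r ≤ σ)]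
  have tail : ∫ r in v..s, g r = 0 := by
    refine (intervalIntegral.integral_congr_ae (g := 0) (ae_of_all _ fun r hr => ?_)).trans
      intervalIntegral.integral_zero
    rw [uIoc_of_le (min_le_left _ _)] at hr
    have hσr : σ ≤ r := ((min_lt_iff.mp hr.1).resolve_left hr.2.not_gt).le
    simp [g, covariationIntegrand, min_eq_right hσr, min_eq_right (by linarith : σ ≤ r + ε)]
  unfold covariationApprox
  rw [← intervalIntegral.integral_add_adjacent_intervals (hg.intervalIntegrable 0 v)
      (hg.intervalIntegrable v s), tail,
    ← intervalIntegral.integral_add_adjacent_intervals (hg.intervalIntegrable 0 u)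
      (hg.intervalIntegrable u v), head]
  ring

lemma exists_covariationApprox_or_covariationIntegrand_of_stop {a n : ℝ → ℝ}
    (ha : Continuous a) (hn : Continuous n) {σ ε s δ : ℝ} (hσ : 0 ≤ σ) (hε : 0 ≤ ε)
    (hs : 0 ≤ s) (hδ : δ < |covariationApprox (fun r => a (min r σ)) n ε s|) :
    (∃ u ∈ Icc 0 s, δ / 2 < |covariationApprox a n ε u|) ∨
      ∃ r ∈ Icc 0 s, δ / 2 < |covariationIntegrand (fun r => a (min r σ)) n ε r| := by
  rw [covariationApprox_stop_eq ha hn hε] at hδ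
  set v := min s σ
  set u := max 0 (v - ε)
  have hvs : v ≤ s := min_le_left _ _
  have huv : u ≤ v := max_le (le_min hs hσ) (by linarith)
  by_cases hu : δ / 2 < |covariationApprox a n ε u|
  · exact .inl ⟨u, ⟨le_max_left _ _, huv.trans hvs⟩, hu⟩
  · set w := ε⁻¹ * ∫ r in u..v, covariationIntegrand (fun r => a (min r σ)) n ε r
    have hwindow : δ / 2 < |w| := by linarith [abs_add_le (covariationApprox a n ε u) w]
    obtain ⟨r, hr, hlt⟩ := exists_lt_abs_of_lt_abs_inv_mul_integral huv
      (by linarith [le_max_right 0 (v - ε)]) hwindow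
    exact .inr ⟨r, ⟨(le_max_left _ _).trans hr.1, hr.2.trans hvs⟩, hlt⟩

def incrementProduct (X Y : ℝ → Ω → ℝ) (z : ℝ × ℝ × ℝ × ℝ) (ω : Ω) : ℝ :=
  |X z.1 ω - X z.2.1 ω| * |Y z.2.2.1 ω - Y z.2.2.2 ω|

def lagTuples (D : Set ℝ) (ρ : ℝ) : Set (ℝ × ℝ × ℝ × ℝ) :=
  D ×ˢ D ×ˢ D ×ˢ D ∩ {z | |z.1 - z.2.1| < ρ ∧ |z.2.2.1 - z.2.2.2| < ρ}

/-- Rational times make this a countable union, hence measurable; by continuity of paths it still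
contains the corresponding event over all real times (`mem_lagProductEvent_of_mem_lagTuples`). -/
def lagProductEvent (X Y : ℝ → Ω → ℝ) (T ρ η : ℝ) : Set Ω :=
  ⋃ z ∈ lagTuples (Icc 0 T ∩ range ((↑) : ℚ → ℝ)) ρ, {ω | η < incrementProduct X Y z ω}

lemma lagTuples_mono {D D' : Set ℝ} {ρ ρ' : ℝ} (hD : D ⊆ D') (hρ : ρ ≤ ρ') :
    lagTuples D ρ ⊆ lagTuples D' ρ' := by
  rintro z ⟨⟨h1, h2, h3, h4⟩, h5, h6⟩
  exact ⟨⟨hD h1, hD h2, hD h3, hD h4⟩, h5.trans_le hρ, h6.trans_le hρ⟩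

lemma measurableSet_lagProductEvent {X Y : ℝ → Ω → ℝ} (hX : ∀ s, Measurable (X s))
    (hY : ∀ s, Measurable (Y s)) (T ρ η : ℝ) : MeasurableSet (lagProductEvent X Y T ρ η) := by
  have hD : (Icc 0 T ∩ range ((↑) : ℚ → ℝ)).Countable :=
    (countable_range _).mono inter_subset_right
  refine .biUnion ((hD.prod (hD.prod (hD.prod hD))).mono inter_subset_left) fun z _ => ?_
  exact measurableSet_lt measurable_const
      (((hX _).sub (hX _)).abs.mul ((hY _).sub (hY _)).abs)

lemma Icc_subset_closure_inter_range_ratCast {a b : ℝ} (hab : a < b) :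
    Icc a b ⊆ closure (Icc a b ∩ range ((↑) : ℚ → ℝ)) :=
  calc Icc a b = closure (Ioo a b) := (closure_Ioo hab.ne).symm
    _ ⊆ closure (Ioo a b ∩ range ((↑) : ℚ → ℝ)) :=
      closure_minimal (Rat.denseRange_cast.open_subset_closure_inter isOpen_Ioo) isClosed_closure
    _ ⊆ closure (Icc a b ∩ range ((↑) : ℚ → ℝ)) :=
      closure_mono (inter_subset_inter_left _ Ioo_subset_Icc_self)

lemma mem_lagProductEvent_of_mem_lagTuples {X Y : ℝ → Ω → ℝ} {ω : Ω}
    (hX : Continuous fun s => X s ω) (hY : Continuous fun s => Y s ω) {T ρ η : ℝ} (hT : 0 < T)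
    {z : ℝ × ℝ × ℝ × ℝ} (hz : z ∈ lagTuples (Icc 0 T) ρ) (hη : η < incrementProduct X Y z ω) :
    ω ∈ lagProductEvent X Y T ρ η := by
  set D := Icc 0 T ∩ range ((↑) : ℚ → ℝ)
  have hF : Continuous fun w => incrementProduct X Y w ω := by unfold incrementProduct; fun_prop
  have hU : IsOpen {w : ℝ × ℝ × ℝ × ℝ | η < incrementProduct X Y w ω ∧
      |w.1 - w.2.1| < ρ ∧ |w.2.2.1 - w.2.2.2| < ρ} :=
    (isOpen_lt continuous_const hF).and
      ((isOpen_lt (by fun_prop) continuous_const).and (isOpen_lt (by fun_prop) continuous_const))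
  have hcl : z ∈ closure (D ×ˢ D ×ˢ D ×ˢ D) := by
    have hD := Icc_subset_closure_inter_range_ratCast hT
    obtain ⟨⟨h1, h2, h3, h4⟩, -⟩ := hz
    simp only [closure_prod_eq]
    exact ⟨hD h1, hD h2, hD h3, hD h4⟩
  obtain ⟨w, ⟨hwη, hw⟩, hwD⟩ := mem_closure_iff.mp hcl _ hU ⟨hη, hz.2⟩
  exact mem_biUnion (x := w) ⟨hwD, hw⟩ hwη

lemma exists_pos_forall_mem_lagTuples_incrementProduct_lt {X Y : ℝ → Ω → ℝ} {ω : Ω}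
    (hX : Continuous fun s => X s ω) (hY : Continuous fun s => Y s ω) (T : ℝ) {η : ℝ}
    (hη : 0 < η) : ∃ θ > 0, ∀ z ∈ lagTuples (Icc 0 T) θ, incrementProduct X Y z ω < η := by
  obtain ⟨θX, hθX, hXunif⟩ := Metric.uniformContinuousOn_iff.mp
    (isCompact_Icc.uniformContinuousOn_of_continuous hX.continuousOn) η hη
  obtain ⟨θY, hθY, hYunif⟩ := Metric.uniformContinuousOn_iff.mp
    (isCompact_Icc.uniformContinuousOn_of_continuous hY.continuousOn) 1 one_pos
  refine ⟨min θX θY, lt_min hθX hθY, ?_⟩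
  rintro z ⟨⟨h1, h2, h3, h4⟩, h5, h6⟩
  have hx := hXunif _ h1 _ h2 (h5.trans_le (min_le_left _ _))
  have hy := hYunif _ h3 _ h4 (h6.trans_le (min_le_right _ _))
  rw [Real.dist_eq] at hx hy
  simpa [incrementProduct] using mul_lt_mul'' hx hy (abs_nonneg _) (abs_nonneg _)

lemma tendsto_measure_lagProductEvent (P : Measure Ω) [IsFiniteMeasure P] {X Y : ℝ → Ω → ℝ}
    (hXm : ∀ s, Measurable (X s)) (hYm : ∀ s, Measurable (Y s)) (hX : ContProcess X)
    (hY : ContProcess Y) (T : ℝ) {η : ℝ} (hη : 0 < η) :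
    Tendsto (fun ρ => P (lagProductEvent X Y T ρ η)) (𝓝 0) (𝓝 0) := by
  rw [← measure_empty (μ := P)]
  refine tendsto_measure_of_tendsto_indicator_of_isFiniteMeasure _ P
    (measurableSet_lagProductEvent hXm hYm T · η) fun ω => ?_
  obtain ⟨θ, hθ, hsmall⟩ :=
    exists_pos_forall_mem_lagTuples_incrementProduct_lt (hX ω) (hY ω) T hη
  filter_upwards [Iio_mem_nhds hθ] with ρ hρ
  simp only [lagProductEvent, mem_iUnion, mem_ofPred_eq, mem_empty_iff_false, iff_false,
    not_exists, not_lt]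
  exact fun z hz => (hsmall z (lagTuples_mono inter_subset_left hρ.le hz)).le

lemma stopped_covariationEvent_subset {A N : ℝ → Ω → ℝ} (hA : ContProcess A)
    (hN : ContProcess N) {τ : Ω → ℝ} {T t ε δ : ℝ} (hτ0 : ∀ ω, 0 ≤ τ ω) (hτT : ∀ ω, τ ω ≤ T)
    (htT : t + 1 ≤ T) (hε : ε ∈ Ioc 0 1) :
    {ω | ∃ s ∈ Icc 0 t,
        δ < |covariationApprox (fun r => A (min r (τ ω)) ω) (fun r => N r ω) ε s|} ⊆
      {ω | ∃ s ∈ Icc 0 t, δ / 2 < |covariationApprox (fun r => A r ω) (fun r => N r ω) ε s|} ∪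
        lagProductEvent A N T (2 * ε) (δ / 2) := by
  obtain ⟨hε0, hε1⟩ := hε
  rintro ω ⟨s, ⟨hs0, hst⟩, hδ⟩
  rcases exists_covariationApprox_or_covariationIntegrand_of_stop (hA ω) (hN ω) (hτ0 ω) hε0.le
    hs0 hδ with ⟨u, hu, hlt⟩ | ⟨r, ⟨hr0, hrs⟩, hlt⟩
  · exact .inl ⟨u, ⟨hu.1, hu.2.trans hst⟩, hlt⟩
  refine .inr (mem_lagProductEvent_of_mem_lagTuples (hA ω) (hN ω) (by linarith)
    (z := (min (r + ε) (τ ω), min r (τ ω), r + ε, r)) ⟨⟨?_, ?_, ?_, ?_⟩, ?_, ?_⟩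
    (by rwa [covariationIntegrand, abs_mul] at hlt))
  · exact ⟨le_min (by linarith) (hτ0 ω), (min_le_right _ _).trans (hτT ω)⟩
  · exact ⟨le_min hr0 (hτ0 ω), (min_le_right _ _).trans (hτT ω)⟩
  · exact ⟨by linarith, by linarith⟩
  · exact ⟨hr0, by linarith⟩
  · calc _ ≤ max |r + ε - r| |τ ω - τ ω| := abs_min_sub_min_le_max _ _ _ _
      _ < 2 * ε := by
        rw [add_sub_cancel_left, sub_self, abs_zero, abs_of_pos hε0, max_eq_left hε0.le]
        linarith
  · rw [add_sub_cancel_left, abs_of_pos hε0]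
    linarith

theorem statement_9_general (P : Measure Ω) [IsProbabilityMeasure P] (𝓕 : Filtration ℝ mΩ)
    (A : ℝ → Ω → ℝ)
    (hAc : ContProcess A) (hAad : Adapted 𝓕 A)
    (hAorth : ∀ N, IsContLocalMartingale 𝓕 P N →
      HasCovariation P A N (fun _ _ => (0 : ℝ)))
    (τ : Ω → ℝ)
    (hτ0 : ∀ ω, 0 ≤ τ ω) (hτbdd : ∃ c : ℝ, ∀ ω, τ ω ≤ c) :
    ∀ N, IsContLocalMartingale 𝓕 P N →
      HasCovariation P (fun s ω => A (min s (τ ω)) ω) N (fun _ _ => (0 : ℝ)) := by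
  intro N hN t ht δ hδ
  obtain ⟨c, hc⟩ := hτbdd
  have hlag : Tendsto (fun ε => P (lagProductEvent A N (max (t + 1) c) (2 * ε) (δ / 2)))
      (𝓝[>] 0) (𝓝 0) :=
    (tendsto_measure_lagProductEvent P (fun _ => hAad.measurable) (fun _ => hN.2.1.measurable)
      hAc hN.1 _ (half_pos hδ)).comp
      (((continuous_const_mul 2).tendsto' 0 0 (mul_zero 2)).mono_left nhdsWithin_le_nhds)
  have horth := hAorth N hN t ht (δ / 2) (half_pos hδ)
  simp only [sub_zero] at horth ⊢
  refine tendsto_of_tendsto_of_tendsto_of_le_of_le' tendsto_const_nhds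
    (by simpa only [add_zero] using horth.add hlag) (Eventually.of_forall fun _ => zero_le) ?_
  filter_upwards [Ioc_mem_nhdsGT one_pos] with ε hε
  exact (measure_mono (stopped_covariationEvent_subset hAc hN.1 hτ0
    (fun ω => (hc ω).trans (le_max_right _ _)) (le_max_left _ _) hε)).trans
    (measure_union_le _ _)

/-- the class of weak zero energy processes is stable under stopping.  If `A` is a
continuous adapted process with `[A, N] = 0` for every continuous local martingale `N`, and `τ`
is a bounded stopping time, then the stopped process `A^τ` also satisfies `[A^τ, N] = 0` for
every continuous local martingale `N`. -/
theorem statement_9 (P : Measure Ω) [IsProbabilityMeasure P] (𝓕 : Filtration ℝ mΩ)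
    (A : ℝ → Ω → ℝ)
    (hAc : ContProcess A) (hAad : Adapted 𝓕 A)
    (hAorth : ∀ N, IsContLocalMartingale 𝓕 P N →
      HasCovariation P A N (fun _ _ => (0 : ℝ)))
    (τ : Ω → ℝ) (hτ : IsStoppingTime 𝓕 (fun ω => ((τ ω : ℝ) : WithTop ℝ)))
    (hτ0 : ∀ ω, 0 ≤ τ ω) (hτbdd : ∃ c : ℝ, ∀ ω, τ ω ≤ c) :
    ∀ N, IsContLocalMartingale 𝓕 P N →
      HasCovariation P (fun s ω => A (min s (τ ω)) ω) N (fun _ _ => (0 : ℝ)) :=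
  statement_9_general P 𝓕 A hAc hAad hAorth τ hτ0 hτbdd
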